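/- For every partition α of a positive integer n there exist a unique integer q > 0 and unique integers s_1,…,s_q ≥ 0 such that the diagonal sequence of α is δ(α) = (1, 2, …, q−1, q, q^{(s_q)}, (q−1)^{(s_{q−1})}, …, 1^{(s_1)}) (followed by zeros), and moreover q(q+1)/2 + Σ_{k=1}^{q} k·s_k = n. -/

import Mathlib

/-- The `i`-th part (1-indexed) of a partition given as a list of parts; `0` beyond the end. -/
def part (α : List ℕ) (i : ℕ) : ℕ := α.getD (i - 1) 0

/-- `α` is a partition of `n`: a nonincreasing list of positive integers summing to `n`. -/
def IsPartition (n : ℕ) (α : List ℕ) : Prop :=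
  α.Pairwise (· ≥ ·) ∧ (∀ x ∈ α, 0 < x) ∧ α.sum = n

/-- The `k`-th entry of the diagonal sequence of `α`:
`d_k = |{i : 1 ≤ i ≤ k and α_i + i - 1 ≥ k}|`. -/
def diag (α : List ℕ) (k : ℕ) : ℕ :=
  ((Finset.Icc 1 k).filter (fun i => k ≤ part α i + i - 1)).card

lemma part_pos_le {α : List ℕ} {i : ℕ} (h : part α i ≠ 0) : i ≤ α.length := by
  by_contra hc
  push_neg at hc
  have : α.length ≤ i - 1 := by omega
  rw [part, List.getD_eq_default _ _ this] at h
  exact h rfl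


lemma part_le_sum {α : List ℕ} : ∀ i, part α i ≤ α.sum := by
  intro i
  unfold part
  rcases Nat.lt_or_ge (i-1) α.length with h | h
  · rw [List.getD_eq_getElem _ _ h]
    exact List.single_le_sum (fun x _ => Nat.zero_le x) _ (List.getElem_mem h)
  · rw [List.getD_eq_default _ _ h]; exact Nat.zero_le _


/-- The sequence `(1, 2, …, q-1, q, q^{(s_q)}, (q-1)^{(s_{q-1})}, …, 1^{(s_1)})`, where the
multiplicities `s_1, …, s_q` are given as a list `s = [s_1, …, s_q]`. -/
def stairList (q : ℕ) (s : List ℕ) : List ℕ :=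
  (List.range q).map (· + 1) ++
    (List.range q).reverse.flatMap fun j => List.replicate (s.getD j 0) (j + 1)



def stairTail (q : ℕ) (s : List ℕ) : List ℕ :=
  (List.range q).reverse.flatMap fun j => List.replicate (s.getD j 0) (j + 1)

lemma stairList_eq (q : ℕ) (s : List ℕ) :
    stairList q s = (List.range q).map (· + 1) ++ stairTail q s := rfl

lemma stairTail_succ (q : ℕ) (s : List ℕ) :
    stairTail (q+1) s = List.replicate (s.getD q 0) (q+1) ++ stairTail q s := by
  simp [stairTail, List.range_succ]

lemma mem_stairTail {q : ℕ} {s : List ℕ} {x : ℕ} (hx : x ∈ stairTail q s) :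
    1 ≤ x ∧ x ≤ q := by
  induction q with
  | zero => simp [stairTail] at hx
  | succ q ih =>
    rw [stairTail_succ, List.mem_append] at hx
    rcases hx with hx | hx
    · have := List.eq_of_mem_replicate hx; omega
    · have := ih hx; omega

lemma mem_stairList {q : ℕ} {s : List ℕ} {x : ℕ} (hx : x ∈ stairList q s) :
    1 ≤ x ∧ x ≤ q := by
  rw [stairList_eq, List.mem_append] at hx
  rcases hx with hx | hx
  · simp only [List.mem_map, List.mem_range] at hx
    obtain ⟨i, hi, rfl⟩ := hx; omega
  · exact mem_stairTail hx

lemma stairList_getD_lt {q k : ℕ} (s : List ℕ) (hk : k < q) :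
    (stairList q s).getD k 0 = k + 1 := by
  rw [stairList_eq, List.getD_append _ _ _ _ (by simpa using hk)]
  rw [List.getD_eq_getElem _ _ (by simpa using hk)]
  simp

lemma stairList_getD_ge {q k : ℕ} (s : List ℕ) (hk : q ≤ k) :
    (stairList q s).getD k 0 = (stairTail q s).getD (k - q) 0 := by
  rw [stairList_eq]
  rcases Nat.lt_or_ge (k - q) (stairTail q s).length with h | h
  · rw [List.getD_eq_getElem _ _ (by simp; omega), List.getD_eq_getElem _ _ h]
    rw [List.getElem_append_right (by simpa using hk)]
    simp
  · rw [List.getD_eq_default _ _ (by simp; omega), List.getD_eq_default _ _ h]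

lemma stairTail_getD (q : ℕ) (s : List ℕ) (k : ℕ) :
    (stairTail q s).getD k 0 =
      ((Finset.range q).filter (fun j => k < ∑ i ∈ Finset.Ico j q, s.getD i 0)).card := by
  induction q generalizing k with
  | zero => simp [stairTail]
  | succ q ih =>
    rw [stairTail_succ]
    set m := s.getD q 0 with hm
    rcases Nat.lt_or_ge k m with h | h
    · rw [List.getD_append _ _ _ _ (by simpa using h)]
      rw [List.getD_eq_getElem _ _ (by simpa using h), List.getElem_replicate]
      have : (Finset.range (q+1)).filter
          (fun j => k < ∑ i ∈ Finset.Ico j (q+1), s.getD i 0) = Finset.range (q+1) := by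
        apply Finset.filter_true_of_mem
        intro j hj
        rw [Finset.mem_range] at hj
        have hsub : Finset.Ico q (q+1) ⊆ Finset.Ico j (q+1) :=
          Finset.Ico_subset_Ico (by omega) le_rfl
        have : m ≤ ∑ i ∈ Finset.Ico j (q+1), s.getD i 0 := by
          calc m = ∑ i ∈ Finset.Ico q (q+1), s.getD i 0 := by simp [hm]
          _ ≤ _ := Finset.sum_le_sum_of_subset hsub
        omega
      rw [this, Finset.card_range]
    · rw [List.getD_append_right _ _ _ _ (by simpa using h)]
      simp only [List.length_replicate]
      rw [ih]
      congr 1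
      rw [Finset.range_add_one, Finset.filter_insert]
      rw [if_neg (by rw [Finset.sum_Ico_succ_top (le_refl q)]; simp only [Finset.Ico_self, Finset.sum_empty, zero_add]; omega)]
      apply Finset.filter_congr
      intro j hj
      rw [Finset.mem_range] at hj
      have : ∑ i ∈ Finset.Ico j (q+1), s.getD i 0
          = (∑ i ∈ Finset.Ico j q, s.getD i 0) + m := by
        rw [Finset.sum_Ico_succ_top (by omega)]
      rw [this]
      constructor <;> intro <;> omega

lemma count_stairTail {q j : ℕ} (s : List ℕ) (hj : j < q) :
    (stairTail q s).count (j+1) = s.getD j 0 := by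
  induction q with
  | zero => omega
  | succ q ih =>
    rw [stairTail_succ, List.count_append, List.count_replicate]
    rcases Nat.lt_or_ge j q with h | h
    · rw [ih h, if_neg (by simp; omega)]; omega
    · have hjq : q = j := by omega
      subst hjq
      have : (stairTail q s).count (q+1) = 0 := by
        rw [List.count_eq_zero]
        intro hmem
        have := mem_stairTail hmem; omega
      simp [this]

lemma eq_of_getD {l₁ l₂ : List ℕ} (h₁ : ∀ x ∈ l₁, 0 < x) (h₂ : ∀ x ∈ l₂, 0 < x)
    (h : ∀ k, l₁.getD k 0 = l₂.getD k 0) : l₁ = l₂ := by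
  induction l₁ generalizing l₂ with
  | nil =>
    cases l₂ with
    | nil => rfl
    | cons b t => have := h 0; simp at this; have := h₂ b (by simp); omega
  | cons a t ih =>
    cases l₂ with
    | nil => have := h 0; simp at this; have := h₁ a (by simp); omega
    | cons b t' =>
      have h0 := h 0
      simp at h0
      rw [h0, ih (fun x hx => h₁ x (List.mem_cons_of_mem _ hx)) (fun x hx => h₂ x (List.mem_cons_of_mem _ hx))
        (fun k => by simpa using h (k+1))]


section DiagLemmas

variable {n : ℕ} {α : List ℕ}

lemma part_anti (hs : α.Pairwise (· ≥ ·)) : ∀ {i j : ℕ}, i ≤ j → part α j ≤ part α i := by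
  have key : ∀ {a b : ℕ}, a ≤ b → α.getD b 0 ≤ α.getD a 0 := by
    intro a b hab
    rcases Nat.lt_or_ge b α.length with h | h
    · rw [List.getD_eq_getElem _ _ h, List.getD_eq_getElem _ _ (lt_of_le_of_lt hab h)]
      rcases Nat.eq_or_lt_of_le hab with rfl | hlt
      · exact le_refl _
      · exact List.pairwise_iff_get.mp hs ⟨a, _⟩ ⟨b, _⟩ hlt
    · rw [List.getD_eq_default _ _ h]; exact Nat.zero_le _
  intro i j hij
  exact key (by omega)

lemma diag_le (k : ℕ) : diag α k ≤ k := by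
  calc diag α k ≤ (Finset.Icc 1 k).card := Finset.card_filter_le _ _
  _ = k := by rw [Nat.card_Icc]; omega

lemma diag_one (hpos : 0 < part α 1) : diag α 1 = 1 := by
  unfold diag
  have : (Finset.Icc 1 1).filter (fun i => 1 ≤ part α i + i - 1) = {1} := by
    ext i
    simp only [Finset.mem_filter, Finset.mem_Icc, Finset.mem_singleton]
    constructor
    · rintro ⟨⟨h1, h2⟩, _⟩; omega
    · rintro rfl; exact ⟨⟨le_refl _, le_refl _⟩, by omega⟩
  rw [this, Finset.card_singleton]

lemma diag_zero (hpos : ∀ x ∈ α, 0 < x) (hsum : α.sum = n) {k : ℕ} (hk : 2 * n < k) :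
    diag α k = 0 := by
  have hlen : α.length ≤ n := hsum ▸ List.length_le_sum_of_one_le _ (fun x hx => hpos x hx)
  unfold diag
  rw [Finset.card_eq_zero, Finset.filter_eq_empty_iff]
  intro i hi
  rw [Finset.mem_Icc] at hi
  rcases Nat.eq_zero_or_pos (part α i) with h0 | h1
  · rw [h0]; omega
  · have h2 : i ≤ α.length := part_pos_le (by omega)
    have h3 : part α i ≤ n := hsum ▸ part_le_sum i
    omega

lemma diag_succ_le (k : ℕ) : diag α (k + 1) ≤ diag α k + 1 := by
  unfold diag
  have hsub : ((Finset.Icc 1 (k+1)).filter (fun i => k+1 ≤ part α i + i - 1)) ⊆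
      insert (k+1) ((Finset.Icc 1 k).filter (fun i => k ≤ part α i + i - 1)) := by
    intro i hi
    simp only [Finset.mem_filter, Finset.mem_Icc] at hi
    rcases Nat.eq_or_lt_of_le hi.1.2 with h | h
    · rw [h]; exact Finset.mem_insert_self _ _
    · apply Finset.mem_insert_of_mem
      simp only [Finset.mem_filter, Finset.mem_Icc]
      exact ⟨⟨hi.1.1, by omega⟩, by omega⟩
  calc _ ≤ _ := Finset.card_le_card hsub
  _ ≤ _ := by rw [Nat.add_comm]; exact (Finset.card_insert_le _ _).trans (by omega)

lemma diag_eq_succ_of (hs : α.Pairwise (· ≥ ·)) {k : ℕ}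
    (h : diag α (k + 1) = diag α k + 1) : diag α (k + 1) = k + 1 := by
  set S1 := (Finset.Icc 1 (k+1)).filter (fun i => k+1 ≤ part α i + i - 1) with hS1
  set S0 := (Finset.Icc 1 k).filter (fun i => k ≤ part α i + i - 1) with hS0
  -- k+1 ∈ S1 and S0 ⊆ S1
  have hmem : (k+1) ∈ S1 ∧ S0 ⊆ S1 := by
    have hsub : S1.erase (k+1) ⊆ S0 := by
      intro i hi
      rw [Finset.mem_erase] at hi
      obtain ⟨hne, hi⟩ := hi
      simp only [hS1, Finset.mem_filter, Finset.mem_Icc] at hi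
      simp only [hS0, Finset.mem_filter, Finset.mem_Icc]
      exact ⟨⟨hi.1.1, by omega⟩, by omega⟩
    have hcard : S0.card + 1 = S1.card := by
      have e1 : S1.card = diag α (k+1) := rfl
      have e0 : S0.card = diag α k := rfl
      omega
    have h1 : (k+1) ∈ S1 := by
      by_contra hc
      have : S1.erase (k+1) = S1 := Finset.erase_eq_of_notMem hc
      have := Finset.card_le_card (this ▸ hsub)
      omega
    have h2 : (S1.erase (k+1)).card = S0.card := by
      rw [Finset.card_erase_of_mem h1]; omega
    have := Finset.eq_of_subset_of_card_le hsub (by omega)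
    constructor
    · exact h1
    · intro i hi
      rw [← this] at hi
      exact Finset.mem_of_mem_erase hi
  obtain ⟨hk1, hsub01⟩ := hmem
  -- show S1 = Icc 1 (k+1)
  have hS1eq : S1 = Finset.Icc 1 (k+1) := by
    by_contra hc
    have hne : (Finset.Icc 1 (k+1)) \ S1 ≠ ∅ := by
      intro hempty
      apply hc
      apply Finset.Subset.antisymm (Finset.filter_subset _ _)
      intro i hi
      by_contra hi'
      have : i ∈ (Finset.Icc 1 (k+1)) \ S1 := Finset.mem_sdiff.mpr ⟨hi, hi'⟩
      rw [hempty] at this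
      exact absurd this (Finset.notMem_empty i)
    obtain ⟨T, hT⟩ := Finset.nonempty_iff_ne_empty.mpr hne
    set C := (Finset.Icc 1 (k+1)) \ S1
    have hCne : C.Nonempty := ⟨T, hT⟩
    set i := C.max' hCne with hi
    have hiC : i ∈ C := Finset.max'_mem _ _
    rw [Finset.mem_sdiff, Finset.mem_Icc] at hiC
    obtain ⟨⟨hi1, hi2⟩, hiS⟩ := hiC
    have hine : i ≠ k + 1 := fun hh => hiS (hh ▸ hk1)
    have hik : i ≤ k := by omega
    -- i+1 ∈ S1
    have hnext : i + 1 ∈ S1 := by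
      by_contra hc2
      have : i + 1 ∈ C := Finset.mem_sdiff.mpr ⟨Finset.mem_Icc.mpr ⟨by omega, by omega⟩, hc2⟩
      have := Finset.le_max' C _ this
      omega
    simp only [hS1, Finset.mem_filter, Finset.mem_Icc] at hnext
    have hp : part α (i+1) + i ≥ k + 1 := by omega
    have hmono : part α (i+1) ≤ part α i := part_anti hs (by omega)
    have hiS0 : i ∈ S0 := by
      simp only [hS0, Finset.mem_filter, Finset.mem_Icc]
      exact ⟨⟨hi1, hik⟩, by omega⟩
    exact hiS (hsub01 hiS0)
  unfold diag
  rw [← hS1, hS1eq, Nat.card_Icc]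
  omega

end DiagLemmas


lemma sum_getD_range (l : List ℕ) : ∀ m, l.length ≤ m →
    ∑ j ∈ Finset.range m, l.getD j 0 = l.sum := by
  induction l with
  | nil => intro m _; simp
  | cons a t ih =>
    intro m hm
    match m, hm with
    | m + 1, hm =>
      rw [Finset.sum_range_succ']
      simp only [List.getD_cons_succ, List.getD_cons_zero]
      rw [ih m (by simpa using hm)]
      simp [Nat.add_comm]

lemma diag_sum {n : ℕ} {α : List ℕ} (hpos : ∀ x ∈ α, 0 < x) (hsum : α.sum = n) :
    ∑ k ∈ Finset.Icc 1 (2*n), diag α k = n := by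
  have hlen : α.length ≤ n := hsum ▸ List.length_le_sum_of_one_le _ (fun x hx => hpos x hx)
  have key : ∀ (k : ℕ), ((Finset.Icc 1 (2*n)).filter (fun i => i ≤ k ∧ k ≤ part α i + i - 1)).card
      = ∑ i ∈ Finset.Icc 1 (2*n), if i ≤ k ∧ k ≤ part α i + i - 1 then 1 else 0 := by
    intro k; rw [Finset.card_filter]
  have key2 : ∀ (i : ℕ), ((Finset.Icc 1 (2*n)).filter (fun k => i ≤ k ∧ k ≤ part α i + i - 1)).card
      = ∑ k ∈ Finset.Icc 1 (2*n), if i ≤ k ∧ k ≤ part α i + i - 1 then 1 else 0 := by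
    intro i; rw [Finset.card_filter]
  have step1 : ∀ k ∈ Finset.Icc 1 (2*n), diag α k =
      ((Finset.Icc 1 (2*n)).filter (fun i => i ≤ k ∧ k ≤ part α i + i - 1)).card := by
    intro k hk
    rw [Finset.mem_Icc] at hk
    unfold diag
    congr 1
    ext i
    simp only [Finset.mem_filter, Finset.mem_Icc]
    omega
  calc ∑ k ∈ Finset.Icc 1 (2*n), diag α k
      = ∑ k ∈ Finset.Icc 1 (2*n), ∑ i ∈ Finset.Icc 1 (2*n),
          (if i ≤ k ∧ k ≤ part α i + i - 1 then 1 else 0) := by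
        refine Finset.sum_congr rfl (fun k hk => ?_)
        rw [step1 k hk, key]
    _ = ∑ i ∈ Finset.Icc 1 (2*n), ∑ k ∈ Finset.Icc 1 (2*n),
          (if i ≤ k ∧ k ≤ part α i + i - 1 then 1 else 0) := Finset.sum_comm
    _ = ∑ i ∈ Finset.Icc 1 (2*n), part α i := by
        refine Finset.sum_congr rfl (fun i hi => ?_)
        rw [Finset.mem_Icc] at hi
        rw [← key2]
        have hple : part α i ≤ n := hsum ▸ part_le_sum i
        have hcase : part α i = 0 ∨ i ≤ n := by
          rcases Nat.eq_zero_or_pos (part α i) with h | h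
          · exact Or.inl h
          · exact Or.inr ((part_pos_le (by omega)).trans hlen)
        have heq : (Finset.Icc 1 (2*n)).filter (fun k => i ≤ k ∧ k ≤ part α i + i - 1)
            = Finset.Icc i (part α i + i - 1) := by
          ext k
          simp only [Finset.mem_filter, Finset.mem_Icc]
          omega
        rw [heq, Nat.card_Icc]
        omega
    _ = n := by
        have hIcc : Finset.Icc 1 (2*n) = Finset.Ico 1 (2*n+1) := by rw [Finset.Ico_add_one_right_eq_Icc]
        rw [hIcc, Finset.sum_Ico_eq_sum_range]
        have hp : ∀ j, part α (1 + j) = α.getD j 0 := by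
          intro j
          simp [part]
        simp only [hp]
        simp only [show 2*n+1-1 = 2*n from rfl]
        rw [sum_getD_range _ _ (by omega)]
        exact hsum

/-- Corollary 2: every partition of `n > 0` has a diagonal sequence of the form
`(1, 2, …, q, q^{(s_q)}, …, 1^{(s_1)})` (followed by zeros) for unique `q > 0` and
`s_1, …, s_q ≥ 0`, and moreover `q(q+1)/2 + ∑ k·s_k = n`. -/
theorem diag_eq_stair_unique (n : ℕ) (hn : 0 < n) (α : List ℕ) (hα : IsPartition n α) :
    ∃! p : ℕ × List ℕ, 0 < p.1 ∧ p.2.length = p.1 ∧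
      (∀ k, 1 ≤ k → diag α k = (stairList p.1 p.2).getD (k - 1) 0) ∧
      p.1 * (p.1 + 1) / 2 + ∑ k ∈ Finset.range p.1, (k + 1) * p.2.getD k 0 = n := by
  obtain ⟨hsort, hpos, hsum⟩ := hα
  have hp1 : 0 < part α 1 := by
    have hne : α ≠ [] := by
      intro h; rw [h] at hsum; simp at hsum; omega
    have hl : 0 < α.length := List.length_pos_iff.mpr hne
    have he : part α 1 = α[0] := by
      show α.getD 0 0 = α[0]
      exact List.getD_eq_getElem _ _ hl
    rw [he]; exact hpos _ (List.getElem_mem hl)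
  have h1 : diag α 1 = 1 := diag_one hp1
  have hzero : ∀ k, 2*n < k → diag α k = 0 := fun k hk => diag_zero hpos hsum hk
  set D := (Finset.Icc 1 (2*n)).filter (fun k => diag α k = k) with hDdef
  have hD : D.Nonempty := by
    refine ⟨1, ?_⟩
    rw [hDdef, Finset.mem_filter, Finset.mem_Icc]
    refine ⟨⟨le_refl 1, by omega⟩, h1⟩
  set q := D.max' hD with hqdef
  have hqD : q ∈ D := D.max'_mem hD
  have hqfacts : (1 ≤ q ∧ q ≤ 2*n) ∧ diag α q = q := by
    have := hqD; rw [hDdef, Finset.mem_filter, Finset.mem_Icc] at this; exact this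
  obtain ⟨⟨hq1, hqN⟩, hdq⟩ := hqfacts
  have hqmax : ∀ k, 1 ≤ k → diag α k = k → k ≤ q := by
    intro k hk hdk
    have hk2 : k ≤ 2*n := by
      by_contra hc; push_neg at hc
      have := hzero k hc; omega
    exact Finset.le_max' D k (by rw [hDdef, Finset.mem_filter, Finset.mem_Icc]; exact ⟨⟨hk, hk2⟩, hdk⟩)
  have hanti : ∀ k, q ≤ k → diag α (k+1) ≤ diag α k := by
    intro k hk
    by_contra hc
    push_neg at hc
    have h2 := diag_succ_le (α := α) k
    have h3 : diag α (k+1) = diag α k + 1 := by omega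
    have h4 := diag_eq_succ_of hsort h3
    have := hqmax (k+1) (by omega) h4
    omega
  have hanti' : ∀ k m, q ≤ k → k ≤ m → diag α m ≤ diag α k := by
    intro k m hk hkm
    induction m, hkm using Nat.le_induction with
    | base => exact le_refl _
    | succ m hm ih => exact (hanti m (hk.trans hm)).trans ih
  have hdle' : ∀ k, 1 ≤ k → k ≤ q → diag α k = k := by
    have key : ∀ j k, k + j = q → 1 ≤ k → diag α k = k := by
      intro j
      induction j with
      | zero => intro k h _; rw [show k = q by omega]; exact hdq
      | succ j ih =>
        intro k h hk
        have ha : diag α (k+1) = k+1 := ih (k+1) (by omega) (by omega)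
        have hb := diag_succ_le (α := α) k
        have hcc := diag_le (α := α) k
        omega
    intro k hk hkq; exact key (q - k) k (by omega) hk
  have hdleq : ∀ k, diag α k ≤ q := by
    intro k
    rcases le_or_gt k q with h | h
    · exact (diag_le k).trans h
    · calc diag α k ≤ diag α q := hanti' q k (le_refl _) (by omega)
      _ = q := hdq
  set s := (List.range q).map
      (fun j => ((Finset.Ioc q (2*n)).filter (fun m => diag α m = j + 1)).card) with hsdef
  have hslen : s.length = q := by simp [hsdef]
  have hsget : ∀ j, j < q →
      s.getD j 0 = ((Finset.Ioc q (2*n)).filter (fun m => diag α m = j + 1)).card := by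
    intro j hj
    rw [List.getD_eq_getElem _ _ (by rw [hslen]; exact hj)]
    simp [hsdef]
  have hcsum : ∀ j, j < q → (∑ i ∈ Finset.Ico j q, s.getD i 0) =
      ((Finset.Ioc q (2*n)).filter (fun m => j + 1 ≤ diag α m)).card := by
    intro j hj
    rw [Finset.card_eq_sum_card_fiberwise (f := fun m => diag α m - 1) (t := Finset.Ico j q)
      (fun m hm => ?_)]
    · refine Finset.sum_congr rfl (fun i hi => ?_)
      rw [Finset.mem_Ico] at hi
      rw [hsget i (by omega)]
      congr 1
      rw [Finset.filter_filter]
      ext m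
      simp only [Finset.mem_filter, Finset.mem_Ioc]
      constructor
      · rintro ⟨h1, h2⟩
        exact ⟨h1, by omega⟩
      · rintro ⟨h1, h2⟩
        exact ⟨h1, by omega⟩
    · rw [Finset.mem_coe, Finset.mem_filter, Finset.mem_Ioc] at hm
      rw [Finset.mem_coe, Finset.mem_Ico]
      show j ≤ diag α m - 1 ∧ diag α m - 1 < q
      have := hdleq m
      omega
  have hkey : ∀ k j, q < k → j < q →
      ((k - 1 - q) < ∑ i ∈ Finset.Ico j q, s.getD i 0 ↔ j + 1 ≤ diag α k) := by
    intro k j hk hj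
    rw [hcsum j hj]
    constructor
    · intro hlt
      by_contra hc
      push_neg at hc
      have hsub : (Finset.Ioc q (2*n)).filter (fun m => j + 1 ≤ diag α m)
          ⊆ Finset.Ioc q (k-1) := by
        intro m hm
        rw [Finset.mem_filter, Finset.mem_Ioc] at hm
        rw [Finset.mem_Ioc]
        refine ⟨hm.1.1, ?_⟩
        by_contra hc2
        push_neg at hc2
        have := hanti' k m (by omega) (by omega)
        omega
      have := Finset.card_le_card hsub
      rw [Nat.card_Ioc] at this
      omega
    · intro hge
      have hkN : k ≤ 2*n := by
        by_contra hc; push_neg at hc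
        have := hzero k hc; omega
      have hsub : Finset.Ioc q k ⊆ (Finset.Ioc q (2*n)).filter (fun m => j + 1 ≤ diag α m) := by
        intro m hm
        rw [Finset.mem_Ioc] at hm
        rw [Finset.mem_filter, Finset.mem_Ioc]
        refine ⟨⟨hm.1, by omega⟩, ?_⟩
        have := hanti' m k (by omega) (by omega)
        omega
      have := Finset.card_le_card hsub
      rw [Nat.card_Ioc] at this
      omega
  have hmatch : ∀ k, 1 ≤ k → diag α k = (stairList q s).getD (k-1) 0 := by
    intro k hk
    rcases le_or_gt k q with h | h
    · rw [stairList_getD_lt s (by omega)]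
      rw [hdle' k hk h]; omega
    · rw [stairList_getD_ge s (by omega), stairTail_getD]
      have e1 : (Finset.range q).filter (fun j => k - 1 - q < ∑ i ∈ Finset.Ico j q, s.getD i 0)
          = (Finset.range q).filter (fun j => j + 1 ≤ diag α k) := by
        apply Finset.filter_congr
        intro j hj
        rw [Finset.mem_range] at hj
        exact hkey k j h hj
      rw [e1]
      have e2 : (Finset.range q).filter (fun j => j + 1 ≤ diag α k)
          = Finset.range (diag α k) := by
        ext j
        simp only [Finset.mem_filter, Finset.mem_range]
        have := hdleq k
        omega
      rw [e2, Finset.card_range]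
  have hsum1 : ∑ k ∈ Finset.Icc 1 q, diag α k = q * (q+1) / 2 := by
    have hc : ∑ k ∈ Finset.Icc 1 q, diag α k = ∑ k ∈ Finset.Icc 1 q, k :=
      Finset.sum_congr rfl (fun k hk => by
        rw [Finset.mem_Icc] at hk; exact hdle' k hk.1 hk.2)
    rw [hc]
    have e : Finset.range (q+1) = insert 0 (Finset.Icc 1 q) := by
      ext m; simp only [Finset.mem_range, Finset.mem_insert, Finset.mem_Icc]; omega
    have h0 : (0:ℕ) ∉ Finset.Icc 1 q := by simp
    have hg := Finset.sum_range_id_mul_two (q+1)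
    rw [e, Finset.sum_insert h0, Nat.zero_add, Nat.add_sub_cancel] at hg
    have h2 : (∑ k ∈ Finset.Icc 1 q, k) * 2 = q * (q+1) := by rw [hg, Nat.mul_comm]
    omega
  have hsum2 : ∑ m ∈ Finset.Ioc q (2*n), diag α m
      = ∑ j ∈ Finset.range q, (j+1) * s.getD j 0 := by
    rw [← Finset.sum_fiberwise_of_maps_to (g := fun m => diag α m) (t := Finset.range (q+1))
      (fun m _ => Finset.mem_range.mpr (by show diag α m < q + 1; have := hdleq m; omega))]
    have e1 : ∀ b ∈ Finset.range (q+1),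
        (∑ m ∈ (Finset.Ioc q (2*n)).filter (fun m => diag α m = b), diag α m)
          = b * ((Finset.Ioc q (2*n)).filter (fun m => diag α m = b)).card := by
      intro b _
      rw [Finset.sum_congr rfl (fun m hm => (Finset.mem_filter.mp hm).2),
        Finset.sum_const, smul_eq_mul, mul_comm]
    have hc : (∑ b ∈ Finset.range (q+1),
        ∑ m ∈ (Finset.Ioc q (2*n)).filter (fun m => (fun m => diag α m) m = b), diag α m)
        = ∑ b ∈ Finset.range (q+1),
          b * ((Finset.Ioc q (2*n)).filter (fun m => diag α m = b)).card :=
      Finset.sum_congr rfl e1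
    rw [hc, Finset.sum_range_succ']
    simp only [Nat.zero_mul, Nat.add_zero, zero_mul, add_zero]
    refine Finset.sum_congr rfl (fun j hj => ?_)
    rw [Finset.mem_range] at hj
    rw [hsget j hj]
  have htotal : q * (q+1) / 2 + ∑ j ∈ Finset.range q, (j+1) * s.getD j 0 = n := by
    have hsplit : Finset.Icc 1 (2*n) = Finset.Icc 1 q ∪ Finset.Ioc q (2*n) := by
      ext m
      simp only [Finset.mem_union, Finset.mem_Icc, Finset.mem_Ioc]
      omega
    have hdisj : Disjoint (Finset.Icc 1 q) (Finset.Ioc q (2*n)) := by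
      rw [Finset.disjoint_left]
      intro m h1 h2
      rw [Finset.mem_Icc] at h1
      rw [Finset.mem_Ioc] at h2
      omega
    have hds := diag_sum hpos hsum
    rw [hsplit, Finset.sum_union hdisj, hsum1, hsum2] at hds
    exact hds
  refine ⟨(q, s), ⟨by omega, hslen, hmatch, htotal⟩, ?_⟩
  rintro ⟨q', s'⟩ ⟨hq', hlen', hmatch', hsum'⟩
  simp only at hq' hlen' hmatch' hsum'
  have hfun : ∀ m, (stairList q' s').getD m 0 = (stairList q s).getD m 0 := by
    intro m
    have ha := hmatch (m+1) (by omega)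
    have hb := hmatch' (m+1) (by omega)
    simp only [Nat.add_sub_cancel] at ha hb
    rw [← hb, ha]
  have hbound : ∀ (a : ℕ) (sa : List ℕ) (m : ℕ), (stairList a sa).getD m 0 ≤ a := by
    intro a sa m
    rcases Nat.lt_or_ge m (stairList a sa).length with h | h
    · rw [List.getD_eq_getElem _ _ h]
      exact (mem_stairList (List.getElem_mem h)).2
    · rw [List.getD_eq_default _ _ h]; omega
  have hqq : q' = q := by
    have e1 : (stairList q' s').getD (q'-1) 0 = q' := by
      rw [stairList_getD_lt s' (by omega)]; omega
    have e2 : (stairList q s).getD (q-1) 0 = q := by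
      rw [stairList_getD_lt s (by omega)]; omega
    have b1 := hbound q s (q'-1)
    have b2 := hbound q' s' (q-1)
    have f1 := hfun (q'-1)
    have f2 := hfun (q-1)
    omega
  have hlists0 : stairList q' s' = stairList q s :=
    eq_of_getD (fun x hx => (mem_stairList hx).1) (fun x hx => (mem_stairList hx).1) hfun
  have hlists : stairList q s' = stairList q s := by rw [hqq] at hlists0; exact hlists0
  have htails : stairTail q s' = stairTail q s := by
    have h := hlists
    rw [stairList_eq, stairList_eq] at h
    exact List.append_cancel_left h
  have hss : s' = s := by
    apply List.ext_getElem (by rw [hlen', hslen, hqq])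
    intro i hi1 hi2
    have hi : i < q := by rw [hslen] at hi2; exact hi2
    have c1 := count_stairTail s' hi
    have c2 := count_stairTail s hi
    rw [htails] at c1
    have e : s'.getD i 0 = s.getD i 0 := by omega
    rwa [List.getD_eq_getElem _ _ hi1, List.getD_eq_getElem _ _ hi2] at e
  rw [Prod.mk.injEq]
  exact ⟨hqq, hss⟩
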